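/- Let n ≥ 1, b > 0, μ ∈ ℝ^n, and let Σ ∈ ℝ^{n×n} be a symmetric positive definite matrix. Define Φ(θ) = exp(−b Log(1 − i⟨μ,θ⟩/b + ‖θ‖²_Σ/(2b))) for θ ∈ ℝ^n, where Log is the principal branch of the complex logarithm. Let p > 0. If p b > n/2, then Φ ∈ L^p(ℝ^n), i.e. θ ↦ |Φ(θ)|^p is Lebesgue integrable on ℝ^n. -/

import Mathlib

/-! Since `|exp (-b Log z)|^p = |z|^(-bp)`, the integrand is `|z(θ)|^(-bp)` with
`z(θ) = 1 - i⟨μ,θ⟩/b + ‖θ‖²_Σ/(2b)`. Bounding `|z(θ)|` below by its real part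
`1 + ‖θ‖²_Σ/(2b)`, and `‖θ‖²_Σ` below by `c‖θ‖²` (positive definiteness plus compactness of the
unit sphere), gives `|z(θ)|^(-bp) ≤ C (1 + ‖θ‖²)^(-bp)`, integrable on `ℝⁿ` because
`2bp > n`. -/

open MeasureTheory Complex

noncomputable section

/-- Euclidean inner product on `ℝ^n`. -/
def dot {n : ℕ} (x y : Fin n → ℝ) : ℝ := ∑ k, x k * y k

/-- Quadratic form `‖θ‖²_A = θ A θᵀ`. -/
def quad {n : ℕ} (A : Matrix (Fin n) (Fin n) ℝ) (θ : Fin n → ℝ) : ℝ :=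
  ∑ k, ∑ l, θ k * A k l * θ l

theorem exists_pos_mul_norm_sq_le {E : Type*} [NormedAddCommGroup E] [NormedSpace ℝ E]
    [ProperSpace E] {f : E → ℝ} (hf : Continuous f) (hsmul : ∀ (a : ℝ) x, f (a • x) = a ^ 2 * f x)
    (hpos : ∀ x, x ≠ 0 → 0 < f x) : ∃ c > 0, ∀ x, c * ‖x‖ ^ 2 ≤ f x := by
  have hzero : f 0 = 0 := by simpa using hsmul 0 0
  obtain ⟨c, hc, hsphere⟩ : ∃ c > 0, ∀ u ∈ Metric.sphere (0 : E) 1, c ≤ f u := by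
    rcases (Metric.sphere (0 : E) 1).eq_empty_or_nonempty with h | h
    · exact ⟨1, one_pos, by simp [h]⟩
    · obtain ⟨u, hu, hmin⟩ := (isCompact_sphere (0 : E) 1).exists_isMinOn h hf.continuousOn
      exact ⟨f u, hpos u (by rintro rfl; simp at hu), hmin⟩
  refine ⟨c, hc, fun x => ?_⟩
  rcases eq_or_ne x 0 with rfl | hx
  · simp [hzero]
  · have hx' : ‖x‖ ≠ 0 := norm_ne_zero_iff.mpr hx
    calc c * ‖x‖ ^ 2 ≤ f (‖x‖⁻¹ • x) * ‖x‖ ^ 2 := by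
          gcongr
          exact hsphere _ (by simp [norm_smul, hx'])
      _ = f x := by rw [hsmul]; field_simp

section QuadraticForm

variable {n : ℕ}

@[fun_prop]
theorem continuous_dot (x : Fin n → ℝ) : Continuous (dot x) := by
  unfold dot; fun_prop

@[fun_prop]
theorem continuous_quad (A : Matrix (Fin n) (Fin n) ℝ) : Continuous (quad A) := by
  unfold quad; fun_prop

theorem quad_smul (A : Matrix (Fin n) (Fin n) ℝ) (a : ℝ) (θ : Fin n → ℝ) :
    quad A (a • θ) = a ^ 2 * quad A θ := by
  simp only [quad, Pi.smul_apply, smul_eq_mul, Finset.mul_sum]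
  exact Finset.sum_congr rfl fun k _ => Finset.sum_congr rfl fun l _ => by ring

theorem quad_eq_dotProduct_mulVec (A : Matrix (Fin n) (Fin n) ℝ) (θ : Fin n → ℝ) :
    quad A θ = dotProduct θ (A.mulVec θ) := by
  simp only [quad, dotProduct, Matrix.mulVec, Finset.mul_sum]
  exact Finset.sum_congr rfl fun k _ => Finset.sum_congr rfl fun l _ => by ring

theorem Matrix.PosDef.quad_pos {A : Matrix (Fin n) (Fin n) ℝ} (hA : A.PosDef)
    {θ : Fin n → ℝ} (hθ : θ ≠ 0) : 0 < quad A θ := by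
  rw [quad_eq_dotProduct_mulVec]
  simpa using (Matrix.posDef_iff_dotProduct_mulVec.mp hA).2 hθ

theorem Matrix.PosDef.exists_pos_mul_norm_sq_le_quad {A : Matrix (Fin n) (Fin n) ℝ}
    (hA : A.PosDef) : ∃ c > 0, ∀ θ, c * ‖θ‖ ^ 2 ≤ quad A θ :=
  exists_pos_mul_norm_sq_le (continuous_quad A) (quad_smul A) fun _ => hA.quad_pos

end QuadraticForm

theorem norm_exp_neg_mul_log_rpow (b p : ℝ) {z : ℂ} (hz : z ≠ 0) :
    ‖exp (-(b : ℂ) * log z)‖ ^ p = ‖z‖ ^ (-(b * p)) := by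
  rw [mul_comm, ← cpow_def_of_ne_zero hz, ← ofReal_neg, norm_cpow_real,
    ← Real.rpow_mul (norm_nonneg z), neg_mul]

theorem integrable_rpow_neg_of_mul_one_add_norm_sq_le {E : Type*} [NormedAddCommGroup E]
    [NormedSpace ℝ E] [FiniteDimensional ℝ E] [MeasurableSpace E] [BorelSpace E]
    (μ : Measure E) [μ.IsAddHaarMeasure] {f : E → ℝ} (hf : Measurable f) {m s : ℝ}
    (hm : 0 < m) (hs : Module.finrank ℝ E < 2 * s) (hle : ∀ x, m * (1 + ‖x‖ ^ 2) ≤ f x) :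
    Integrable (fun x => f x ^ (-s)) μ := by
  have hs0 : 0 < s := by linarith [(Module.finrank ℝ E).cast_nonneg (α := ℝ)]
  have hbracket := (integrable_rpow_neg_one_add_norm_sq (μ := μ) hs).const_mul (m ^ (-s))
  refine hbracket.mono' (hf.pow_const _).aestronglyMeasurable (.of_forall fun x => ?_)
  have hfx : 0 < f x := lt_of_lt_of_le (by positivity) (hle x)
  rw [Real.norm_of_nonneg (by positivity), show -(2 * s) / 2 = -s by ring,
    ← Real.mul_rpow hm.le (by positivity)]
  exact Real.rpow_le_rpow_of_nonpos (by positivity) (hle x) (by linarith)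

section VarianceGamma

variable {n : ℕ}

/-- The argument of `Log` in the Lévy exponent: `Ψ_V(θ) = -b Log (vgBase b μ S θ)`. -/
def vgBase (b : ℝ) (μ : Fin n → ℝ) (S : Matrix (Fin n) (Fin n) ℝ) (θ : Fin n → ℝ) : ℂ :=
  1 - I * (dot μ θ : ℂ) / (b : ℂ) + (quad S θ : ℂ) / (2 * (b : ℂ))

theorem continuous_vgBase (b : ℝ) (μ : Fin n → ℝ) (S : Matrix (Fin n) (Fin n) ℝ) :
    Continuous (vgBase b μ S) := by
  unfold vgBase
  fun_prop

theorem re_vgBase (b : ℝ) (μ : Fin n → ℝ) (S : Matrix (Fin n) (Fin n) ℝ) (θ : Fin n → ℝ) :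
    (vgBase b μ S θ).re = 1 + quad S θ / (2 * b) := by
  rw [vgBase, ← ofReal_ofNat, ← ofReal_mul]
  simp only [add_re, sub_re, one_re, div_ofReal_re, ofReal_re, mul_re, I_re, I_im, ofReal_im]
  ring

theorem exists_pos_mul_one_add_norm_sq_le_norm_vgBase {b : ℝ} (hb : 0 < b) (μ : Fin n → ℝ)
    {S : Matrix (Fin n) (Fin n) ℝ} (hS : S.PosDef) :
    ∃ m > 0, ∀ θ, m * (1 + ‖θ‖ ^ 2) ≤ ‖vgBase b μ S θ‖ := by
  obtain ⟨c, hc, hquad⟩ := hS.exists_pos_mul_norm_sq_le_quad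
  refine ⟨min 1 (c / (2 * b)), by positivity, fun θ => ?_⟩
  calc min 1 (c / (2 * b)) * (1 + ‖θ‖ ^ 2)
        = min 1 (c / (2 * b)) + min 1 (c / (2 * b)) * ‖θ‖ ^ 2 := by ring
    _ ≤ 1 + c * ‖θ‖ ^ 2 / (2 * b) := by
        rw [mul_div_right_comm]
        gcongr
        exacts [min_le_left _ _, min_le_right _ _]
    _ ≤ 1 + quad S θ / (2 * b) := by gcongr; exact hquad θ
    _ = (vgBase b μ S θ).re := (re_vgBase b μ S θ).symm
    _ ≤ ‖vgBase b μ S θ‖ := re_le_norm _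

end VarianceGamma

theorem stmt2 {n : ℕ} (b : ℝ) (hb : 0 < b) (μ : Fin n → ℝ)
    (S : Matrix (Fin n) (Fin n) ℝ) (hS : S.PosDef) (p : ℝ)
    (hpb : p * b > n / 2) :
    Integrable (fun θ : Fin n → ℝ =>
      ‖Complex.exp (-(b : ℂ) * Complex.log (1 -
        Complex.I * (dot μ θ : ℂ) / (b : ℂ) + (quad S θ : ℂ) / (2 * (b : ℂ))))‖ ^ p) := by
  obtain ⟨m, hm, hle⟩ := exists_pos_mul_one_add_norm_sq_le_norm_vgBase hb μ hS
  have hne : ∀ θ, vgBase b μ S θ ≠ 0 := fun θ =>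
    norm_pos_iff.mp ((by positivity : 0 < m * (1 + ‖θ‖ ^ 2)).trans_le (hle θ))
  have hint : Integrable (fun θ => ‖vgBase b μ S θ‖ ^ (-(b * p))) :=
    integrable_rpow_neg_of_mul_one_add_norm_sq_le volume
      (continuous_vgBase b μ S).norm.measurable hm (by rw [Module.finrank_fin_fun]; linarith) hle
  exact hint.congr (.of_forall fun θ => (norm_exp_neg_mul_log_rpow b p (hne θ)).symm)
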